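/- arXiv:2309.02710 — 2 statements merged into one kernel-verified Lean document; each statement's English description precedes it below -/
import Mathlib

section
/- Let X ⊆ ℝ^d be a finite set of n points, let z be an integer with 1 ≤ z < n, and let S ⊆ ℝ^d be a nonempty finite set. If ∑_{x∈X} min{φ_{{x}}(S), ρ_X(S)/z} ≤ γ·ρ* for some γ > 0 and some value ρ* ≥ 0 (i.e., the condition of the thresholded sum holds with parameter η = 1), then ρ_X(S) ≤ γ·ρ*. In other words, with η = 1 the algorithm achieves a γ-approximation while discarding only z points as outliers. -/
open Finset

open scoped Classical

/-- `phiPt x S` is the squared distance from `x` to its nearest center in `S`,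
i.e. `min_{s ∈ S} ‖x - s‖²`. -/
noncomputable def phiPt {d : ℕ} (x : EuclideanSpace ℝ (Fin d))
    (S : Finset (EuclideanSpace ℝ (Fin d))) : ℝ :=
  sInf ((fun s => ‖x - s‖ ^ 2) '' (S : Set (EuclideanSpace ℝ (Fin d))))

/-- `phi A S = ∑_{x ∈ A} min_{s ∈ S} ‖x - s‖²`, the `k`-means cost of centers `S` on `A`. -/
noncomputable def phi {d : ℕ} (A S : Finset (EuclideanSpace ℝ (Fin d))) : ℝ :=
  ∑ x ∈ A, phiPt x S

/-- The mean (centroid) of a finite set of points. -/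
noncomputable def mean {d : ℕ} (A : Finset (EuclideanSpace ℝ (Fin d))) :
    EuclideanSpace ℝ (Fin d) :=
  (A.card : ℝ)⁻¹ • ∑ x ∈ A, x

/-- `rho X S z` is the cost of the centers `S` on `X` after discarding the `z`
points of `X` farthest from `S`: the minimum of `phi Y S` over `Y ⊆ X` with
`|Y| = |X| - z`. -/
noncomputable def rho {d : ℕ} (X S : Finset (EuclideanSpace ℝ (Fin d))) (z : ℕ) : ℝ :=
  sInf ((fun Y : Finset (EuclideanSpace ℝ (Fin d)) => phi Y S) ''
    {Y : Finset (EuclideanSpace ℝ (Fin d)) | Y ⊆ X ∧ Y.card = X.card - z})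

/-! Put `t = ρ_X(S) / z`. If at least `z` points have `φ_{{x}}(S) ≥ t`, they alone contribute
`z * t = ρ_X(S)` to the thresholded sum. Otherwise the points with `φ_{{x}}(S) < t` include a
set `Y` of `|X| - z` points, on which the truncation is inactive, so the sum is at least
`φ_Y(S) ≥ ρ_X(S)`. -/

section TruncatedSum

variable {α : Type*} (X : Finset α) (f : α → ℝ) {t : ℝ}

theorem natCast_mul_le_sum_min_of_le_card {z : ℕ} (hf : ∀ x ∈ X, 0 ≤ f x) (ht : 0 ≤ t)
    (hz : z ≤ #(X.filter (t ≤ f ·))) : z * t ≤ ∑ x ∈ X, min (f x) t := by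
  calc (z : ℝ) * t ≤ #(X.filter (t ≤ f ·)) * t := by gcongr
    _ = ∑ x ∈ X.filter (t ≤ f ·), min (f x) t := by
      rw [Finset.sum_congr rfl fun x hx => min_eq_right (mem_filter.mp hx).2, sum_const,
        nsmul_eq_mul]
    _ ≤ ∑ x ∈ X, min (f x) t :=
      sum_le_sum_of_subset_of_nonneg (filter_subset _ _) fun x hx _ => le_min (hf x hx) ht

theorem exists_subset_card_sub_sum_le_sum_min {z : ℕ} (hf : ∀ x ∈ X, 0 ≤ f x) (ht : 0 ≤ t)
    (hz : #(X.filter (t ≤ f ·)) ≤ z) :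
    ∃ Y ⊆ X, #Y = #X - z ∧ ∑ x ∈ Y, f x ≤ ∑ x ∈ X, min (f x) t := by
  have hbelow : #X - z ≤ #(X.filter (f · < t)) := by
    have := card_filter_add_card_filter_not (s := X) (t ≤ f ·)
    simp only [not_le] at this
    omega
  obtain ⟨Y, hY, hcard⟩ := exists_subset_card_eq hbelow
  have hYX : Y ⊆ X := hY.trans (filter_subset _ _)
  refine ⟨Y, hYX, hcard, ?_⟩
  calc ∑ x ∈ Y, f x = ∑ x ∈ Y, min (f x) t :=
        sum_congr rfl fun x hx => (min_eq_left (mem_filter.mp (hY hx)).2.le).symm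
    _ ≤ ∑ x ∈ X, min (f x) t :=
        sum_le_sum_of_subset_of_nonneg hYX fun x hx _ => le_min (hf x hx) ht

end TruncatedSum

section Cost

variable {d : ℕ}

theorem phiPt_nonneg (x : EuclideanSpace ℝ (Fin d)) (S : Finset (EuclideanSpace ℝ (Fin d))) :
    0 ≤ phiPt x S :=
  Real.sInf_nonneg <| by
    rintro _ ⟨s, -, rfl⟩
    positivity

theorem phi_nonneg (A S : Finset (EuclideanSpace ℝ (Fin d))) : 0 ≤ phi A S :=
  sum_nonneg fun x _ => phiPt_nonneg x S

theorem rho_nonneg (X S : Finset (EuclideanSpace ℝ (Fin d))) (z : ℕ) : 0 ≤ rho X S z :=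
  Real.sInf_nonneg <| by
    rintro _ ⟨Y, -, rfl⟩
    exact phi_nonneg Y S

theorem rho_le_phi {X S Y : Finset (EuclideanSpace ℝ (Fin d))} {z : ℕ} (hYX : Y ⊆ X)
    (hY : #Y = #X - z) : rho X S z ≤ phi Y S :=
  csInf_le ⟨0, by rintro _ ⟨Y', -, rfl⟩; exact phi_nonneg Y' S⟩ ⟨Y, ⟨hYX, hY⟩, rfl⟩

theorem rho_le_sum_min_phiPt (X S : Finset (EuclideanSpace ℝ (Fin d))) {z : ℕ} (hz : 1 ≤ z) :
    rho X S z ≤ ∑ x ∈ X, min (phiPt x S) (rho X S z / z) := by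
  have hnonneg : ∀ x ∈ X, 0 ≤ phiPt x S := fun x _ => phiPt_nonneg x S
  have ht : 0 ≤ rho X S z / z := div_nonneg (rho_nonneg X S z) z.cast_nonneg
  rcases le_total z #(X.filter (rho X S z / z ≤ phiPt · S)) with hfar | hfar
  · calc rho X S z = z * (rho X S z / z) := by field_simp
      _ ≤ _ := natCast_mul_le_sum_min_of_le_card X _ hnonneg ht hfar
  · obtain ⟨Y, hYX, hY, hsum⟩ := exists_subset_card_sub_sum_le_sum_min X _ hnonneg ht hfar
    exact (rho_le_phi hYX hY).trans hsum

end Cost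

theorem stmt2_general {d : ℕ} (X S : Finset (EuclideanSpace ℝ (Fin d)))
    (z : ℕ) (hz1 : 1 ≤ z)
    (γ ρstar : ℝ)
    (h : ∑ x ∈ X, min (phiPt x S) (rho X S z / z) ≤ γ * ρstar) :
    rho X S z ≤ γ * ρstar :=
  (rho_le_sum_min_phiPt X S hz1).trans h

/-- With threshold parameter `η = 1`, if the thresholded sum
`∑_{x ∈ X} min{φ_{{x}}(S), ρ_X(S)/z}` is at most `γ·ρ*`, then `ρ_X(S) ≤ γ·ρ*`:
a `γ`-approximation while discarding only `z` points as outliers. -/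
theorem stmt2 {d : ℕ} (X S : Finset (EuclideanSpace ℝ (Fin d)))
    (n z : ℕ) (hn : X.card = n) (hz1 : 1 ≤ z) (hz : z < n)
    (hS : S.Nonempty)
    (γ ρstar : ℝ) (hγ : 0 < γ) (hρstar : 0 ≤ ρstar)
    (h : ∑ x ∈ X, min (phiPt x S) (rho X S z / z) ≤ γ * ρstar) :
    rho X S z ≤ γ * ρstar :=
  stmt2_general X S z hz1 γ ρstar h
end

section
/- Let A ⊆ ℝ^d be a nonempty finite set with mean μ = (1/|A|)∑_{x∈A} x, and let S ⊆ ℝ^d be a nonempty finite set of centers. If φ_A(S) ≥ 64·φ_A({μ}), then φ_A(S) ≤ (64/31)·|A|·φ_{{μ}}(S); in particular, φ_{{μ}}(S) ≥ (31/|A|)·φ_A({μ}). -/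
open Finset

open scoped Classical

/-!
Let `s ∈ S` be the center nearest to `μ`. For every `x ∈ A`,
`φ_{{x}}(S) ≤ ‖x - s‖² ≤ 2‖x - μ‖² + 2‖μ - s‖²`, and summing over `A` gives
`φ_A(S) ≤ 2 φ_A({μ}) + 2|A| φ_{{μ}}(S)`. The hypothesis bounds the first term by
`φ_A(S) / 32`, which leaves `(31/32) φ_A(S) ≤ 2|A| φ_{{μ}}(S)`; feeding the hypothesis
in once more yields the second inequality.
-/

section KMeansCost

variable {d : ℕ}

lemma bddBelow_sqDist_image (x : EuclideanSpace ℝ (Fin d))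
    (S : Finset (EuclideanSpace ℝ (Fin d))) :
    BddBelow ((fun s => ‖x - s‖ ^ 2) '' (S : Set (EuclideanSpace ℝ (Fin d)))) :=
  ⟨0, by rintro _ ⟨s, -, rfl⟩; positivity⟩

lemma phiPt_le_of_mem (x : EuclideanSpace ℝ (Fin d))
    {S : Finset (EuclideanSpace ℝ (Fin d))} {s : EuclideanSpace ℝ (Fin d)} (hs : s ∈ S) :
    phiPt x S ≤ ‖x - s‖ ^ 2 :=
  csInf_le (bddBelow_sqDist_image x S) ⟨s, hs, rfl⟩

lemma exists_mem_phiPt_eq (x : EuclideanSpace ℝ (Fin d))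
    {S : Finset (EuclideanSpace ℝ (Fin d))} (hS : S.Nonempty) :
    ∃ s ∈ S, phiPt x S = ‖x - s‖ ^ 2 := by
  obtain ⟨s, hs, hval⟩ :=
    (hS.to_set.image fun s => ‖x - s‖ ^ 2).csInf_mem (S.finite_toSet.image _)
  exact ⟨s, hs, hval.symm⟩

lemma phiPt_singleton (x y : EuclideanSpace ℝ (Fin d)) : phiPt x {y} = ‖x - y‖ ^ 2 := by
  simp [phiPt]

lemma phi_singleton (A : Finset (EuclideanSpace ℝ (Fin d))) (y : EuclideanSpace ℝ (Fin d)) :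
    phi A {y} = ∑ x ∈ A, ‖x - y‖ ^ 2 := by
  simp only [phi, phiPt_singleton]

lemma phiPt_le_two_mul_add (x y : EuclideanSpace ℝ (Fin d))
    {S : Finset (EuclideanSpace ℝ (Fin d))} (hS : S.Nonempty) :
    phiPt x S ≤ 2 * ‖x - y‖ ^ 2 + 2 * phiPt y S := by
  obtain ⟨s, hs, hys⟩ := exists_mem_phiPt_eq y hS
  calc phiPt x S ≤ ‖x - s‖ ^ 2 := phiPt_le_of_mem x hs
    _ ≤ (‖x - y‖ + ‖y - s‖) ^ 2 := by gcongr; exact norm_sub_le_norm_sub_add_norm_sub x y s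
    _ ≤ 2 * (‖x - y‖ ^ 2 + ‖y - s‖ ^ 2) := add_sq_le
    _ = 2 * ‖x - y‖ ^ 2 + 2 * phiPt y S := by rw [hys]; ring

lemma phi_le_two_mul_add (A : Finset (EuclideanSpace ℝ (Fin d))) (y : EuclideanSpace ℝ (Fin d))
    {S : Finset (EuclideanSpace ℝ (Fin d))} (hS : S.Nonempty) :
    phi A S ≤ 2 * phi A {y} + 2 * A.card * phiPt y S :=
  calc phi A S ≤ ∑ x ∈ A, (2 * ‖x - y‖ ^ 2 + 2 * phiPt y S) :=
        sum_le_sum fun x _ => phiPt_le_two_mul_add x y hS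
    _ = 2 * phi A {y} + 2 * A.card * phiPt y S := by
        rw [sum_add_distrib, ← mul_sum, sum_const, nsmul_eq_mul, phi_singleton]
        ring

end KMeansCost

/-- first property of Lemma 2. If `φ_A(S) ≥ 64·φ_A({μ})` where `μ` is the
mean of `A`, then `φ_A(S) ≤ (64/31)·|A|·φ_{{μ}}(S)`; in particular
`φ_{{μ}}(S) ≥ (31/|A|)·φ_A({μ})`. -/
theorem stmt3 {d : ℕ} (A S : Finset (EuclideanSpace ℝ (Fin d)))
    (hA : A.Nonempty) (hS : S.Nonempty)
    (h : phi A S ≥ 64 * phi A {mean A}) :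
    phi A S ≤ (64 / 31) * A.card * phiPt (mean A) S ∧
      phiPt (mean A) S ≥ (31 / A.card) * phi A {mean A} := by
  have hcost := phi_le_two_mul_add A (mean A) hS
  have hn : (0 : ℝ) < A.card := by exact_mod_cast hA.card_pos
  refine ⟨by linarith, ?_⟩
  rw [ge_iff_le, div_mul_eq_mul_div, div_le_iff₀ hn]
  linarith
end
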